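/- Consider the two-item all-pay auction with B_1 ≠ B_2, let s be the player with the larger budget and w the other, and set L_j = min{B_1, B_2, v_{1j}, v_{2j}}. Assume v_{s1} > L_1 and v_{s2} = L_2. Define T_2 = L_2 − (L_1/v_{w1})·v_{w2} and T_4 = L_2 − ((v_{s1} − L_1)/v_{s1})·v_{s2}, and additionally assume T_2 ≥ 0, T_4 ≥ 0, and L_1 + T_2 ≤ B_s. Then the following profile is a Nash equilibrium: player s's strategy is the mixture that places an atom of mass 1 − L_2/v_{w2} at the point (L_1, 0); with probability T_2/v_{w2}, is uniform on the segment {(L_1, t) : t ∈ (0, T_2]}; and with probability L_1/v_{w1}, is uniform on the segment joining (0, L_2) to (L_1, T_2). Player w's strategy is the mixture that, with probability (L_2 − T_4)/v_{s2}, is uniform on the segment {(0, t) : t ∈ [T_4, L_2]}; and with probability L_1/v_{s1}, is uniform on the segment joining (0, T_4) to (L_1, 0). -/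

import Mathlib

open MeasureTheory Set

noncomputable section

/-- `L_j = min {B₁, B₂, v_{1j}, v_{2j}}` for item `j` of the two-item auction. -/
def Lval2 (B : Fin 2 → ℝ) (v : Fin 2 → Fin 2 → ℝ) (j : Fin 2) : ℝ :=
  min (min (B 0) (B 1)) (min (v 0 j) (v 1 j))

/-- Probability that player `i` wins item `j` when bidding `xi` on it while the
opponent bids `xo`: the strictly higher bid wins; on a tie at `L_j` the player with
the strictly larger `min {Bᵢ, v_{ij}}` wins, and all other ties are fair coins. -/
def winProb2 (B : Fin 2 → ℝ) (v : Fin 2 → Fin 2 → ℝ) (i j : Fin 2) (xi xo : ℝ) : ℝ :=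
  if xo < xi then 1
  else if xi < xo then 0
  else if xi = Lval2 B v j ∧ min (B (1 - i)) (v (1 - i) j) < min (B i) (v i j) then 1
  else if xi = Lval2 B v j ∧ min (B i) (v i j) < min (B (1 - i)) (v (1 - i) j) then 0
  else 1 / 2

/-- Expected total utility of player `i` from the pure bid vectors `p` (own) and
`q` (opponent): the sum over the two items of the item payoffs. -/
def payoff2 (B : Fin 2 → ℝ) (v : Fin 2 → Fin 2 → ℝ) (i : Fin 2) (p q : ℝ × ℝ) : ℝ :=
  (winProb2 B v i 0 p.1 q.1 * v i 0 - p.1) +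
    (winProb2 B v i 1 p.2 q.2 * v i 1 - p.2)

/-- Feasible bid vectors of a player with budget `Bi`. -/
def Feas (Bi : ℝ) : Set (ℝ × ℝ) := {p | 0 ≤ p.1 ∧ 0 ≤ p.2 ∧ p.1 + p.2 ≤ Bi}

/-- A mixed strategy with budget `Bi`: a probability measure on the feasible set. -/
def IsStrategy2 (Bi : ℝ) (μ : Measure (ℝ × ℝ)) : Prop :=
  IsProbabilityMeasure μ ∧ μ (Feas Bi) = 1

/-- Expected utility of player `i` when he plays `μ` and the opponent plays `ν`. -/
def expUtil2 (B : Fin 2 → ℝ) (v : Fin 2 → Fin 2 → ℝ) (i : Fin 2)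
    (μ ν : Measure (ℝ × ℝ)) : ℝ :=
  ∫ p, (∫ q, payoff2 B v i p q ∂ν) ∂μ

/-- `(F 0, F 1)` is a (mixed) Nash equilibrium of the two-item all-pay auction. -/
def IsNash2 (B : Fin 2 → ℝ) (v : Fin 2 → Fin 2 → ℝ) (F : Fin 2 → Measure (ℝ × ℝ)) :
    Prop :=
  (∀ i, IsStrategy2 (B i) (F i)) ∧
  ∀ i, ∀ μ, IsStrategy2 (B i) μ →
    expUtil2 B v i μ (F (1 - i)) ≤ expUtil2 B v i (F i) (F (1 - i))

/-- The uniform distribution on the segment from `a` to `b` in the plane: the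
pushforward of the uniform distribution on `[0, 1]` under the affine
parameterization of the segment. -/
def unifSeg (a b : ℝ × ℝ) : Measure (ℝ × ℝ) :=
  Measure.map (fun t : ℝ => ((1 - t) * a.1 + t * b.1, (1 - t) * a.2 + t * b.2))
    (volume.restrict (Icc (0 : ℝ) 1))

/-!
A player's payoff is the sum of his item payoffs, and the payoff on an item depends on the
opponent's strategy only through its marginal on that item. These marginals are one-item all-pay
equilibrium laws: the two segments through `(0, T₄)` (resp. `(L₁, T₂)`) split the uniform law on
`[0, L₂]` at `T₄` (resp. `T₂`), so the marginals of `w`'s strategy are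
`(1 - L₁/v_{s1}) δ₀ + (L₁/v_{s1}) U[0, L₁]` and `U[0, L₂]`, and those of `s`'s strategy are
`(1 - L₁/v_{w1}) δ_{L₁} + (L₁/v_{w1}) U[0, L₁]` and `(1 - L₂/v_{w2}) δ₀ + (L₂/v_{w2}) U[0, L₂]`.
Against the law with CDF `1 - (L - x)/V` on `[0, L]` a bidder of value `V` earns at most `V - L`,
with equality on `(0, L]`; against the law with CDF `x/V` on `[0, L)` and an atom at `L` he earns
at most `0`, with equality on `[0, L)`, provided he loses the tie at `L` (as `w` does at `L₁`) and
gains nothing by bidding above `L` (for `w` on item 1, as `L₁ = min B_w v_{w1}`). So every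
feasible bid earns at most `v_{s1} - L₁` for `s` and `v_{w2} - L₂` for `w`, with equality almost
surely under the player's own strategy.
-/

namespace AllPay

section UnifInterval

def unifInterval (c d : ℝ) : Measure ℝ :=
  Measure.map (fun t : ℝ => (1 - t) * c + t * d) (volume.restrict (Icc (0 : ℝ) 1))

lemma measurable_segmentParam (c d : ℝ) : Measurable (fun t : ℝ => (1 - t) * c + t * d) := by
  fun_prop

instance (c d : ℝ) : IsProbabilityMeasure (unifInterval c d) :=
  have : IsProbabilityMeasure (volume.restrict (Icc (0 : ℝ) 1)) := ⟨by simp⟩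
  Measure.isProbabilityMeasure_map (measurable_segmentParam c d).aemeasurable

lemma unifInterval_self (c : ℝ) : unifInterval c c = Measure.dirac c := by
  simp [unifInterval, ← add_mul, Measure.map_const]

lemma unifInterval_eq_smul_restrict {c d : ℝ} (hcd : c ≠ d) :
    unifInterval c d = ENNReal.ofReal |d - c|⁻¹ • volume.restrict (uIcc c d) := by
  have hpre : (fun t : ℝ => (1 - t) * c + t * d) ⁻¹' uIcc c d = Icc 0 1 := by
    have hf : (fun t : ℝ => (1 - t) * c + t * d) = AffineMap.lineMap c d := by
      ext t; rw [AffineMap.lineMap_apply_ring]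
    rw [hf, ← segment_eq_uIcc, segment_eq_image_lineMap,
      preimage_image_eq _ (AffineMap.lineMap_injective ℝ hcd)]
  have hcomp : ∀ A : Set ℝ, (fun t : ℝ => (1 - t) * c + t * d) ⁻¹' A
      = (fun t => (d - c) * t) ⁻¹' ((· + c) ⁻¹' A) := fun A => by
    ext t; simp only [mem_preimage]; ring_nf
  ext S hS
  rw [unifInterval, Measure.map_apply (measurable_segmentParam c d) hS,
    Measure.restrict_apply (measurable_segmentParam c d hS), Measure.smul_apply,
    Measure.restrict_apply hS, ← hpre, ← preimage_inter, smul_eq_mul, hcomp,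
    Real.volume_preimage_mul_left (sub_ne_zero.mpr hcd.symm), measure_preimage_add_right,
    abs_inv]

lemma unifInterval_comm (c d : ℝ) : unifInterval c d = unifInterval d c := by
  rcases eq_or_ne c d with rfl | hcd
  · rfl
  rw [unifInterval_eq_smul_restrict hcd, unifInterval_eq_smul_restrict hcd.symm, uIcc_comm,
    abs_sub_comm]

lemma unifInterval_real_singleton {c d : ℝ} (hcd : c ≠ d) (x : ℝ) :
    (unifInterval c d).real {x} = 0 := by
  simp [unifInterval_eq_smul_restrict hcd, measureReal_def]

lemma unifInterval_zero_real_Iio {L x : ℝ} (hL : 0 < L) (hx0 : 0 ≤ x) (hxL : x ≤ L) :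
    (unifInterval 0 L).real (Iio x) = x / L := by
  have hI : Iio x ∩ uIcc 0 L = Ico 0 x := by
    ext t
    simp only [uIcc_of_le hL.le, mem_inter_iff, mem_Iio, mem_Icc, mem_Ico]
    constructor
    · rintro ⟨h1, h2, -⟩; exact ⟨h2, h1⟩
    · rintro ⟨h1, h2⟩; exact ⟨h2, h1, by linarith⟩
  rw [unifInterval_eq_smul_restrict hL.ne, measureReal_ennreal_smul_apply,
    measureReal_restrict_apply measurableSet_Iio, hI, Real.volume_real_Ico_of_le hx0,
    ENNReal.toReal_ofReal (by positivity), sub_zero, sub_zero, abs_of_pos hL, div_eq_inv_mul]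

private lemma smul_unifInterval_of_lt {c T D : ℝ} (hcT : c < T) (hD : 0 < D) :
    ENNReal.ofReal ((T - c) / D) • unifInterval c T
      = ENNReal.ofReal D⁻¹ • volume.restrict (Icc c T) := by
  rw [unifInterval_eq_smul_restrict hcT.ne, smul_smul, ← ENNReal.ofReal_mul (by positivity),
    uIcc_of_le hcT.le, abs_of_pos (sub_pos.mpr hcT)]
  congr 2
  field_simp [(sub_pos.mpr hcT).ne']

lemma unifInterval_split {c T d : ℝ} (hcT : c ≤ T) (hTd : T ≤ d) (hcd : c < d) :
    ENNReal.ofReal ((T - c) / (d - c)) • unifInterval c T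
      + ENNReal.ofReal ((d - T) / (d - c)) • unifInterval T d = unifInterval c d := by
  have hD : 0 < d - c := sub_pos.mpr hcd
  rcases hcT.eq_or_lt with rfl | hcT
  · simp [div_self hD.ne']
  rcases hTd.eq_or_lt with rfl | hTd
  · simp [div_self hD.ne']
  rw [smul_unifInterval_of_lt hcT hD, smul_unifInterval_of_lt hTd hD, ← smul_add,
    ← Measure.restrict_congr_set (Ioc_ae_eq_Icc (a := T) (b := d)),
    ← Measure.restrict_union ((Iic_disjoint_Ioc le_rfl).mono_left Icc_subset_Iic_self)
      measurableSet_Ioc,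
    Icc_union_Ioc_eq_Icc hcT.le hTd.le, unifInterval_eq_smul_restrict hcd.ne,
    uIcc_of_le hcd.le, abs_of_pos hD]

end UnifInterval

variable {B : Fin 2 → ℝ} {v : Fin 2 → Fin 2 → ℝ}

section WinProb

lemma winProb2_nonneg (i j : Fin 2) (x y : ℝ) : 0 ≤ winProb2 B v i j x y := by
  unfold winProb2; split_ifs <;> norm_num

lemma winProb2_le_one (i j : Fin 2) (x y : ℝ) : winProb2 B v i j x y ≤ 1 := by
  unfold winProb2; split_ifs <;> norm_num

lemma winProb2_of_lt {i j : Fin 2} {x y : ℝ} (h : y < x) : winProb2 B v i j x y = 1 :=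
  if_pos h

lemma winProb2_of_gt {i j : Fin 2} {x y : ℝ} (h : x < y) : winProb2 B v i j x y = 0 := by
  rw [winProb2, if_neg h.not_gt, if_pos h]

lemma winProb2_eq_indicator (i j : Fin 2) (x y : ℝ) :
    winProb2 B v i j x y
      = (Iio x).indicator 1 y + winProb2 B v i j x x * ({x} : Set ℝ).indicator 1 y := by
  rcases lt_trichotomy y x with h | rfl | h
  · simp [winProb2_of_lt h, h, h.ne]
  · simp
  · simp [winProb2_of_gt h, h.not_gt, h.ne']

lemma measurable_winProb2 (i j : Fin 2) :
    Measurable (fun z : ℝ × ℝ => winProb2 B v i j z.1 z.2) := by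
  have htie : ∀ P : Prop, MeasurableSet {z : ℝ × ℝ | z.1 = Lval2 B v j ∧ P} := fun P =>
    (measurableSet_eq_fun measurable_fst measurable_const).inter (MeasurableSet.const P)
  unfold winProb2
  exact Measurable.ite (measurableSet_lt measurable_snd measurable_fst) measurable_const
    (Measurable.ite (measurableSet_lt measurable_fst measurable_snd) measurable_const
      (Measurable.ite (htie _) measurable_const
        (Measurable.ite (htie _) measurable_const measurable_const)))

lemma integrable_winProb2_comp {α : Type*} [MeasurableSpace α] (ρ : Measure α)
    [IsFiniteMeasure ρ] {π : α → ℝ} (hπ : Measurable π) (i j : Fin 2) (x : ℝ) :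
    Integrable (fun q => winProb2 B v i j x (π q)) ρ :=
  .of_bound ((measurable_winProb2 i j).comp (measurable_const.prodMk hπ)).aestronglyMeasurable 1
    (ae_of_all _ fun q => by
      rw [Real.norm_of_nonneg (winProb2_nonneg i j x _)]; exact winProb2_le_one i j x _)

lemma integral_winProb2 (ρ : Measure ℝ) [IsFiniteMeasure ρ] (i j : Fin 2) (x : ℝ) :
    ∫ y, winProb2 B v i j x y ∂ρ = ρ.real (Iio x) + winProb2 B v i j x x * ρ.real {x} := by
  conv_lhs => rw [funext (winProb2_eq_indicator (B := B) (v := v) i j x)]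
  rw [integral_add ((integrable_const 1).indicator measurableSet_Iio)
      (((integrable_const 1).indicator (measurableSet_singleton x)).const_mul _),
    integral_const_mul, integral_indicator_one measurableSet_Iio,
    integral_indicator_one (measurableSet_singleton x)]

lemma integral_winProb2_le_one (ρ : Measure ℝ) [IsProbabilityMeasure ρ] (i j : Fin 2) (x : ℝ) :
    ∫ y, winProb2 B v i j x y ∂ρ ≤ 1 := by
  have hunion : ρ.real (Iio x) + ρ.real {x} = ρ.real (Iic x) := by
    rw [← Iio_union_right, measureReal_union (by simp) (measurableSet_singleton x)]
  rw [integral_winProb2]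
  nlinarith [winProb2_le_one (B := B) (v := v) i j x x, measureReal_nonneg (μ := ρ) (s := {x}),
    measureReal_le_one (μ := ρ) (s := Iic x)]

end WinProb

section Lval2

lemma Lval2_le_budget (i j : Fin 2) : Lval2 B v j ≤ B i := by
  fin_cases i
  · exact (min_le_left _ _).trans (min_le_left _ _)
  · exact (min_le_left _ _).trans (min_le_right _ _)

lemma Lval2_le_value (i j : Fin 2) : Lval2 B v j ≤ v i j := by
  fin_cases i
  · exact (min_le_right _ _).trans (min_le_left _ _)
  · exact (min_le_right _ _).trans (min_le_right _ _)

lemma Lval2_eq_min (i j : Fin 2) :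
    Lval2 B v j = min (min (B i) (v i j)) (min (B (1 - i)) (v (1 - i) j)) := by
  fin_cases i
  · exact min_min_min_comm _ _ _ _
  · exact (min_min_min_comm _ _ _ _).trans (min_comm _ _)

lemma Lval2_eq_min_of_lt {i j : Fin 2} (h : Lval2 B v j < min (B i) (v i j)) :
    Lval2 B v j = min (B (1 - i)) (v (1 - i) j) := by
  rw [Lval2_eq_min i j] at h ⊢
  exact min_eq_right (not_le.mp fun h' => h.ne (min_eq_left h')).le

lemma winProb2_Lval2_self {i j : Fin 2}
    (h : min (B i) (v i j) < min (B (1 - i)) (v (1 - i) j)) :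
    winProb2 B v i j (Lval2 B v j) (Lval2 B v j) = 0 := by
  simp [winProb2, h, h.not_gt]

end Lval2

section ItemPayoff

variable (B v) in
def itemPayoff (i j : Fin 2) (ρ : Measure ℝ) (x : ℝ) : ℝ :=
  (∫ y, winProb2 B v i j x y ∂ρ) * v i j - x

lemma itemPayoff_le (ρ : Measure ℝ) [IsProbabilityMeasure ρ] {i j : Fin 2} (hv : 0 ≤ v i j)
    (x : ℝ) : itemPayoff B v i j ρ x ≤ v i j - x := by
  have := integral_winProb2_le_one (B := B) (v := v) ρ i j x
  unfold itemPayoff; nlinarith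

lemma neg_le_itemPayoff (ρ : Measure ℝ) {i j : Fin 2} (hv : 0 ≤ v i j) (x : ℝ) :
    -x ≤ itemPayoff B v i j ρ x := by
  have : 0 ≤ ∫ y, winProb2 B v i j x y ∂ρ := integral_nonneg (winProb2_nonneg i j x)
  unfold itemPayoff; nlinarith

/-- The equilibrium bid law of a one-item all-pay auction against an opponent of value `V`,
with its atom at `a ∈ {0, L}`. -/
def unifWithAtom (a L V : ℝ) : Measure ℝ :=
  ENNReal.ofReal (1 - L / V) • Measure.dirac a + ENNReal.ofReal (L / V) • unifInterval 0 L

lemma unifWithAtom_zero_self {L : ℝ} (hL : L ≠ 0) : unifWithAtom 0 L L = unifInterval 0 L := by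
  simp [unifWithAtom, div_self hL]

lemma isProbabilityMeasure_unifWithAtom {a L V : ℝ} (hL : 0 ≤ L) (hLV : L ≤ V) :
    IsProbabilityMeasure (unifWithAtom a L V) := by
  have hV : 0 ≤ L / V := div_nonneg hL (hL.trans hLV)
  have hV1 : 0 ≤ 1 - L / V := sub_nonneg.mpr (div_le_one_of_le₀ hLV (hL.trans hLV))
  constructor
  simp [unifWithAtom, ← ENNReal.ofReal_add hV1 hV]

lemma integral_winProb2_unifWithAtom {a L V x : ℝ} (hL : 0 < L) (hLV : L ≤ V) (hx0 : 0 ≤ x)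
    (hxL : x ≤ L) (i j : Fin 2) :
    ∫ y, winProb2 B v i j x y ∂unifWithAtom a L V
      = (1 - L / V) * winProb2 B v i j x a + x / V := by
  have hV : 0 ≤ L / V := div_nonneg hL.le (hL.le.trans hLV)
  have hV1 : 0 ≤ 1 - L / V := sub_nonneg.mpr (div_le_one_of_le₀ hLV (hL.le.trans hLV))
  have hint : ∀ (ρ : Measure ℝ) [IsFiniteMeasure ρ] (c : ℝ),
      Integrable (winProb2 B v i j x) (ENNReal.ofReal c • ρ) := fun ρ _ _ =>
    (integrable_winProb2_comp ρ measurable_id i j x).smul_measure ENNReal.ofReal_ne_top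
  rw [unifWithAtom, integral_add_measure (hint _ _) (hint _ _),
    integral_smul_measure, integral_smul_measure, integral_dirac, integral_winProb2,
    unifInterval_zero_real_Iio hL hx0 hxL, unifInterval_real_singleton hL.ne,
    ENNReal.toReal_ofReal hV, ENNReal.toReal_ofReal hV1, smul_eq_mul, smul_eq_mul]
  field_simp
  ring

variable {i j : Fin 2} {L x : ℝ}

lemma itemPayoff_unifWithAtom_zero_of_mem (hL : 0 < L) (hLv : L ≤ v i j) (hx0 : 0 < x)
    (hxL : x ≤ L) : itemPayoff B v i j (unifWithAtom 0 L (v i j)) x = v i j - L := by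
  have hv : v i j ≠ 0 := (hL.trans_le hLv).ne'
  rw [itemPayoff, integral_winProb2_unifWithAtom hL hLv hx0.le hxL, winProb2_of_lt hx0]
  field_simp
  ring

lemma itemPayoff_unifWithAtom_zero_le (hL : 0 < L) (hLv : L ≤ v i j) (hx : 0 ≤ x) :
    itemPayoff B v i j (unifWithAtom 0 L (v i j)) x ≤ v i j - L := by
  have hv : 0 < v i j := hL.trans_le hLv
  rcases hx.eq_or_lt with rfl | hx0
  · have hmass : 0 ≤ 1 - L / v i j := sub_nonneg.mpr (div_le_one_of_le₀ hLv hv.le)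
    rw [itemPayoff, integral_winProb2_unifWithAtom hL hLv le_rfl hL.le, zero_div, add_zero,
      sub_zero]
    calc (1 - L / v i j) * winProb2 B v i j 0 0 * v i j ≤ (1 - L / v i j) * 1 * v i j := by
          gcongr; exact winProb2_le_one i j 0 0
      _ = v i j - L := by field_simp
  rcases le_or_gt x L with hxL | hLx
  · exact (itemPayoff_unifWithAtom_zero_of_mem hL hLv hx0 hxL).le
  · have := isProbabilityMeasure_unifWithAtom (a := 0) hL.le hLv
    linarith [itemPayoff_le (B := B) (unifWithAtom 0 L (v i j)) hv.le x]

lemma itemPayoff_unifWithAtom_top_of_lt (hL : 0 < L) (hLv : L ≤ v i j) (hx0 : 0 ≤ x)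
    (hxL : x < L) : itemPayoff B v i j (unifWithAtom L L (v i j)) x = 0 := by
  have hv : v i j ≠ 0 := (hL.trans_le hLv).ne'
  rw [itemPayoff, integral_winProb2_unifWithAtom hL hLv hx0 hxL.le, winProb2_of_gt hxL]
  field_simp
  ring

lemma itemPayoff_unifWithAtom_top_le_zero (hL : 0 < L) (hLv : L ≤ v i j)
    (htie : winProb2 B v i j L L = 0) (hx : 0 ≤ x) (hxv : L < x → v i j ≤ x) :
    itemPayoff B v i j (unifWithAtom L L (v i j)) x ≤ 0 := by
  rcases lt_trichotomy x L with hxL | rfl | hLx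
  · exact (itemPayoff_unifWithAtom_top_of_lt hL hLv hx hxL).le
  · rw [itemPayoff, integral_winProb2_unifWithAtom hL hLv hx le_rfl, htie, mul_zero, zero_add,
      div_mul_cancel₀ _ (hL.trans_le hLv).ne', sub_self]
  · have := isProbabilityMeasure_unifWithAtom (a := L) hL.le hLv
    linarith [itemPayoff_le (B := B) (unifWithAtom L L (v i j)) (hL.le.trans hLv) x, hxv hLx]

lemma itemPayoff_unifInterval_le_zero (hv : 0 < v i j) (hx : 0 ≤ x) :
    itemPayoff B v i j (unifInterval 0 (v i j)) x ≤ 0 := by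
  simpa [unifWithAtom_zero_self hv.ne'] using
    itemPayoff_unifWithAtom_zero_le (B := B) hv le_rfl hx

lemma itemPayoff_unifInterval_of_mem (hv : 0 < v i j) (hx : x ∈ Icc 0 (v i j)) :
    itemPayoff B v i j (unifInterval 0 (v i j)) x = 0 := by
  refine le_antisymm (itemPayoff_unifInterval_le_zero hv hx.1) ?_
  rcases hx.1.eq_or_lt with rfl | hx0
  · simpa using neg_le_itemPayoff (B := B) (unifInterval 0 (v i j)) hv.le 0
  · simpa [unifWithAtom_zero_self hv.ne'] using
      (itemPayoff_unifWithAtom_zero_of_mem (B := B) hv le_rfl hx0 hx.2).ge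

end ItemPayoff

section Equilibrium

lemma integral_payoff2 (ν : Measure (ℝ × ℝ)) [IsProbabilityMeasure ν] (i : Fin 2) (p : ℝ × ℝ) :
    ∫ q, payoff2 B v i p q ∂ν
      = itemPayoff B v i 0 (ν.map Prod.fst) p.1 + itemPayoff B v i 1 (ν.map Prod.snd) p.2 := by
  have hmap : ∀ (j : Fin 2) (x : ℝ) {π : ℝ × ℝ → ℝ} (hπ : Measurable π),
      ∫ q, winProb2 B v i j x (π q) ∂ν = ∫ y, winProb2 B v i j x y ∂(ν.map π) := fun j x _ hπ =>
    (integral_map hπ.aemeasurable ((measurable_winProb2 i j).comp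
      (measurable_const.prodMk measurable_id)).aestronglyMeasurable).symm
  have h0 := (integrable_winProb2_comp (B := B) (v := v) ν measurable_fst i 0 p.1).mul_const (v i 0)
  have h1 := (integrable_winProb2_comp (B := B) (v := v) ν measurable_snd i 1 p.2).mul_const (v i 1)
  have h0' : Integrable (fun q : ℝ × ℝ => winProb2 B v i 0 p.1 q.1 * v i 0 - p.1) ν :=
    h0.sub (integrable_const _)
  have h1' : Integrable (fun q : ℝ × ℝ => winProb2 B v i 1 p.2 q.2 * v i 1 - p.2) ν :=
    h1.sub (integrable_const _)
  simp only [payoff2]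
  rw [integral_add h0' h1', integral_sub h0 (integrable_const _),
    integral_sub h1 (integrable_const _), integral_mul_const, integral_mul_const, integral_const,
    integral_const, hmap 0 p.1 measurable_fst, hmap 1 p.2 measurable_snd]
  simp [itemPayoff]

lemma measurable_payoff2 (i : Fin 2) :
    Measurable (fun z : (ℝ × ℝ) × (ℝ × ℝ) => payoff2 B v i z.1 z.2) :=
  ((((measurable_winProb2 i 0).comp (measurable_fst.fst.prodMk measurable_snd.fst)).mul_const
      _).sub measurable_fst.fst).add
    ((((measurable_winProb2 i 1).comp (measurable_fst.snd.prodMk measurable_snd.snd)).mul_const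
      _).sub measurable_fst.snd)

lemma abs_payoff2_le (i : Fin 2) (p q : ℝ × ℝ) :
    |payoff2 B v i p q| ≤ |v i 0| + |v i 1| + |p.1| + |p.2| := by
  have hW : ∀ j x y, |winProb2 B v i j x y * v i j| ≤ |v i j| := fun j x y => by
    rw [abs_mul, abs_of_nonneg (winProb2_nonneg i j x y)]
    exact mul_le_of_le_one_left (abs_nonneg _) (winProb2_le_one i j x y)
  unfold payoff2
  linarith [abs_add_le (winProb2 B v i 0 p.1 q.1 * v i 0 - p.1)
      (winProb2 B v i 1 p.2 q.2 * v i 1 - p.2),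
    abs_sub (winProb2 B v i 0 p.1 q.1 * v i 0) p.1, abs_sub (winProb2 B v i 1 p.2 q.2 * v i 1) p.2,
    hW 0 p.1 q.1, hW 1 p.2 q.2]

lemma measurableSet_feas (b : ℝ) : MeasurableSet (Feas b) :=
  (measurableSet_le measurable_const measurable_fst).inter
    ((measurableSet_le measurable_const measurable_snd).inter
      (measurableSet_le (measurable_fst.add measurable_snd) measurable_const))

lemma isStrategy2_iff {b : ℝ} {μ : Measure (ℝ × ℝ)} [IsProbabilityMeasure μ] :
    IsStrategy2 b μ ↔ ∀ᵐ p ∂μ, p ∈ Feas b := by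
  have h := ae_iff_measure_eq (p := (· ∈ Feas b)) (μ := μ) (measurableSet_feas b).nullMeasurableSet
  rw [measure_univ] at h
  exact ⟨fun hμ => h.2 hμ.2, fun hae => ⟨‹_›, h.1 hae⟩⟩

lemma expUtil2_le_of_forall_le {i : Fin 2} {μ ν : Measure (ℝ × ℝ)} (hμ : IsStrategy2 (B i) μ)
    [IsProbabilityMeasure ν] {c : ℝ} (h : ∀ p ∈ Feas (B i), ∫ q, payoff2 B v i p q ∂ν ≤ c) :
    expUtil2 B v i μ ν ≤ c := by
  have := hμ.1
  have hfeas := isStrategy2_iff.mp hμ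
  have hbound : ∀ᵐ p ∂μ, ‖∫ q, payoff2 B v i p q ∂ν‖ ≤ |v i 0| + |v i 1| + B i := by
    filter_upwards [hfeas] with p ⟨hp1, hp2, hpB⟩
    refine (norm_integral_le_of_norm_le_const (ae_of_all _ fun q => abs_payoff2_le i p q)).trans ?_
    rw [probReal_univ, mul_one, abs_of_nonneg hp1, abs_of_nonneg hp2]
    linarith
  have hint : Integrable (fun p => ∫ q, payoff2 B v i p q ∂ν) μ :=
    .of_bound (measurable_payoff2 i).stronglyMeasurable.integral_prod_right'.aestronglyMeasurable
      _ hbound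
  calc expUtil2 B v i μ ν ≤ ∫ _, c ∂μ :=
        integral_mono_ae hint (integrable_const c) (by filter_upwards [hfeas] using h)
    _ = c := by simp

lemma expUtil2_eq_of_ae_eq {i : Fin 2} {μ ν : Measure (ℝ × ℝ)} [IsProbabilityMeasure μ] {c : ℝ}
    (h : ∀ᵐ p ∂μ, ∫ q, payoff2 B v i p q ∂ν = c) : expUtil2 B v i μ ν = c := by
  rw [expUtil2, integral_congr_ae h]
  simp

variable (B v) in
def IsBestResponse2 (i : Fin 2) (μ ν : Measure (ℝ × ℝ)) : Prop :=
  ∀ μ', IsStrategy2 (B i) μ' → expUtil2 B v i μ' ν ≤ expUtil2 B v i μ ν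

lemma isBestResponse2_of_payoff {i : Fin 2} {μ ν : Measure (ℝ × ℝ)} [IsProbabilityMeasure μ]
    [IsProbabilityMeasure ν] {c : ℝ} (hle : ∀ p ∈ Feas (B i), ∫ q, payoff2 B v i p q ∂ν ≤ c)
    (heq : ∀ᵐ p ∂μ, ∫ q, payoff2 B v i p q ∂ν = c) : IsBestResponse2 B v i μ ν :=
  fun _ hμ' => (expUtil2_le_of_forall_le hμ' hle).trans (expUtil2_eq_of_ae_eq heq).ge

lemma isNash2_ite {s : Fin 2} {μ ν : Measure (ℝ × ℝ)} (hμ : IsStrategy2 (B s) μ)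
    (hν : IsStrategy2 (B (1 - s)) ν) (hμν : IsBestResponse2 B v s μ ν)
    (hνμ : IsBestResponse2 B v (1 - s) ν μ) :
    IsNash2 B v (fun k => if k = s then μ else ν) := by
  have hne : 1 - s ≠ s := by fin_cases s <;> decide
  have hcases : ∀ i : Fin 2, i = s ∨ i = 1 - s := by
    intro i; fin_cases i <;> fin_cases s <;> decide
  refine ⟨fun i => ?_, fun i => ?_⟩
  · rcases hcases i with rfl | rfl <;> simpa [hne]
  · rcases hcases i with rfl | rfl <;> simpa [hne]

end Equilibrium

section UnifSeg

lemma measurable_segmentParam₂ (a b : ℝ × ℝ) :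
    Measurable (fun t : ℝ => ((1 - t) * a.1 + t * b.1, (1 - t) * a.2 + t * b.2)) := by
  fun_prop

lemma map_fst_unifSeg (a b : ℝ × ℝ) : (unifSeg a b).map Prod.fst = unifInterval a.1 b.1 := by
  rw [unifSeg, Measure.map_map measurable_fst (measurable_segmentParam₂ a b)]
  rfl

lemma map_snd_unifSeg (a b : ℝ × ℝ) : (unifSeg a b).map Prod.snd = unifInterval a.2 b.2 := by
  rw [unifSeg, Measure.map_map measurable_snd (measurable_segmentParam₂ a b)]
  rfl

lemma ae_unifSeg_mem {a b : ℝ × ℝ} {S : Set (ℝ × ℝ)} (hS : MeasurableSet S)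
    (h : ∀ t ∈ Ioo (0 : ℝ) 1, ((1 - t) * a.1 + t * b.1, (1 - t) * a.2 + t * b.2) ∈ S) :
    ∀ᵐ p ∂unifSeg a b, p ∈ S := by
  rw [unifSeg, ae_map_iff (p := (· ∈ S)) (measurable_segmentParam₂ a b).aemeasurable hS,
    ← Measure.restrict_congr_set Ioo_ae_eq_Icc, ae_restrict_iff' measurableSet_Ioo]
  exact ae_of_all _ h

end UnifSeg

/-- `W1`, `W2` are the opponent's values of the two items. -/
def strongStrategy (L1 L2 T2 W1 W2 : ℝ) : Measure (ℝ × ℝ) :=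
  ENNReal.ofReal (1 - L2 / W2) • Measure.dirac ((L1, 0) : ℝ × ℝ) +
    ENNReal.ofReal (T2 / W2) • unifSeg (L1, 0) (L1, T2) +
    ENNReal.ofReal (L1 / W1) • unifSeg (0, L2) (L1, T2)

/-- `S1`, `S2` are the opponent's values of the two items. -/
def weakStrategy (L1 L2 T4 S1 S2 : ℝ) : Measure (ℝ × ℝ) :=
  ENNReal.ofReal ((L2 - T4) / S2) • unifSeg (0, T4) (0, L2) +
    ENNReal.ofReal (L1 / S1) • unifSeg (0, T4) (L1, 0)

section StrongStrategy

variable {L1 L2 T2 W1 W2 : ℝ}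

lemma strongStrategy_map_fst (hW2 : 0 < W2) (hL2W : L2 ≤ W2) (hT2 : 0 ≤ T2)
    (hT2def : T2 = L2 - L1 / W1 * W2) :
    (strongStrategy L1 L2 T2 W1 W2).map Prod.fst = unifWithAtom L1 L1 W1 := by
  have hm0 : 0 ≤ 1 - L2 / W2 := sub_nonneg.mpr (div_le_one_of_le₀ hL2W hW2.le)
  have hm1 : 0 ≤ T2 / W2 := div_nonneg hT2 hW2.le
  simp only [strongStrategy, unifWithAtom, Measure.map_add _ _ measurable_fst,
    Measure.map_smul, Measure.map_dirac' measurable_fst, map_fst_unifSeg, unifInterval_self]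
  rw [← add_smul, ← ENNReal.ofReal_add hm0 hm1, hT2def]
  congr 3
  field_simp
  ring

lemma strongStrategy_map_snd (hW1 : 0 < W1) (hW2 : 0 < W2) (hL1 : 0 < L1) (hT2 : 0 ≤ T2)
    (hT2def : T2 = L2 - L1 / W1 * W2) :
    (strongStrategy L1 L2 T2 W1 W2).map Prod.snd = unifWithAtom 0 L2 W2 := by
  have hT2L : T2 < L2 := by rw [hT2def]; linarith [show 0 < L1 / W1 * W2 by positivity]
  have hL2 : 0 < L2 := hT2.trans_lt hT2L
  have hmass : L1 / W1 = L2 / W2 * ((L2 - T2) / (L2 - 0)) := by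
    rw [sub_zero, hT2def]; field_simp; ring
  simp only [strongStrategy, unifWithAtom, Measure.map_add _ _ measurable_snd,
    Measure.map_smul, Measure.map_dirac' measurable_snd, map_snd_unifSeg]
  rw [unifInterval_comm L2 T2, add_assoc, ← unifInterval_split hT2 hT2L.le hL2, smul_add,
    smul_smul, smul_smul, ← ENNReal.ofReal_mul (by positivity),
    ← ENNReal.ofReal_mul (by positivity), ← hmass]
  congr 4
  rw [sub_zero, sub_zero]
  field_simp

lemma strongStrategy_ae_mem {S : Set (ℝ × ℝ)} (hS : MeasurableSet S) (h0 : (L1, 0) ∈ S)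
    (h1 : ∀ t ∈ Ioo (0 : ℝ) 1, (L1, t * T2) ∈ S)
    (h2 : ∀ t ∈ Ioo (0 : ℝ) 1, (t * L1, (1 - t) * L2 + t * T2) ∈ S) :
    ∀ᵐ p ∂strongStrategy L1 L2 T2 W1 W2, p ∈ S := by
  simp only [strongStrategy, ae_add_measure_iff]
  refine ⟨⟨Measure.ae_smul_measure ((ae_dirac_iff hS).2 h0) _,
    Measure.ae_smul_measure (ae_unifSeg_mem hS fun t ht => ?_) _⟩,
    Measure.ae_smul_measure (ae_unifSeg_mem hS fun t ht => ?_) _⟩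
  · convert h1 t ht using 2 <;> ring
  · convert h2 t ht using 2; ring

lemma isProbabilityMeasure_strongStrategy (hW1 : 0 < W1) (hW2 : 0 < W2) (hL1 : 0 < L1)
    (hL2W : L2 ≤ W2) (hT2 : 0 ≤ T2) (hT2def : T2 = L2 - L1 / W1 * W2) :
    IsProbabilityMeasure (strongStrategy L1 L2 T2 W1 W2) := by
  have hL1W : L1 ≤ W1 := by
    rw [← div_le_one hW1]
    exact le_of_mul_le_mul_right (by linarith) hW2
  have : IsProbabilityMeasure ((strongStrategy L1 L2 T2 W1 W2).map Prod.fst) := by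
    rw [strongStrategy_map_fst hW2 hL2W hT2 hT2def]
    exact isProbabilityMeasure_unifWithAtom hL1.le hL1W
  exact Measure.isProbabilityMeasure_of_map Prod.fst

lemma isStrategy2_strongStrategy {b : ℝ} (hW1 : 0 < W1) (hW2 : 0 < W2) (hL1 : 0 < L1)
    (hL2W : L2 ≤ W2) (hT2 : 0 ≤ T2) (hT2def : T2 = L2 - L1 / W1 * W2) (hL1b : L1 + T2 ≤ b)
    (hL2b : L2 ≤ b) : IsStrategy2 b (strongStrategy L1 L2 T2 W1 W2) := by
  have := isProbabilityMeasure_strongStrategy hW1 hW2 hL1 hL2W hT2 hT2def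
  have hL2 : 0 ≤ L2 := by linarith [show 0 ≤ L1 / W1 * W2 by positivity]
  refine isStrategy2_iff.mpr (strongStrategy_ae_mem (measurableSet_feas b) ?_ ?_ ?_)
  · exact ⟨hL1.le, le_rfl, by simpa using (le_add_of_nonneg_right hT2).trans hL1b⟩
  · intro t ht
    exact ⟨hL1.le, mul_nonneg ht.1.le hT2, by nlinarith [ht.2]⟩
  · intro t ht
    refine ⟨mul_nonneg ht.1.le hL1.le, ?_, by nlinarith [ht.1, ht.2]⟩
    exact add_nonneg (mul_nonneg (by linarith [ht.2]) hL2) (mul_nonneg ht.1.le hT2)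

lemma strongStrategy_ae_mem_Ioc_prod_Icc (hW1 : 0 < W1) (hW2 : 0 < W2) (hL1 : 0 < L1)
    (hT2 : 0 ≤ T2) (hT2def : T2 = L2 - L1 / W1 * W2) :
    ∀ᵐ p ∂strongStrategy L1 L2 T2 W1 W2, p ∈ Ioc 0 L1 ×ˢ Icc 0 L2 := by
  have hT2L : T2 < L2 := by rw [hT2def]; linarith [show 0 < L1 / W1 * W2 by positivity]
  refine strongStrategy_ae_mem (measurableSet_Ioc.prod measurableSet_Icc)
    ⟨⟨hL1, le_rfl⟩, le_rfl, by linarith⟩ (fun t ht => ?_) (fun t ht => ?_)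
  · exact ⟨⟨hL1, le_rfl⟩, mul_nonneg ht.1.le hT2, by nlinarith [ht.1, ht.2]⟩
  · refine ⟨⟨mul_pos ht.1 hL1, by nlinarith [ht.2]⟩, ?_, by nlinarith [ht.1, ht.2]⟩
    exact add_nonneg (mul_nonneg (by linarith [ht.2]) (by linarith)) (mul_nonneg ht.1.le hT2)

end StrongStrategy

section WeakStrategy

variable {L1 L2 T4 S1 S2 : ℝ}

private lemma weakStrategy_T4_eq (hL1 : 0 < L1) (hL1S : L1 ≤ S1) (hS2 : S2 = L2)
    (hT4def : T4 = L2 - (S1 - L1) / S1 * S2) : T4 = L1 * L2 / S1 := by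
  have : S1 ≠ 0 := (hL1.trans_le hL1S).ne'
  rw [hT4def, hS2]; field_simp; ring

private lemma weakStrategy_T4_mem (hL1 : 0 < L1) (hL1S : L1 ≤ S1) (hL2 : 0 < L2) (hS2 : S2 = L2)
    (hT4def : T4 = L2 - (S1 - L1) / S1 * S2) : T4 ∈ Ioc 0 L2 := by
  have hS1 : 0 < S1 := hL1.trans_le hL1S
  rw [weakStrategy_T4_eq hL1 hL1S hS2 hT4def, mem_Ioc, div_le_iff₀ hS1]
  exact ⟨by positivity, by nlinarith⟩

lemma weakStrategy_map_fst (hL1 : 0 < L1) (hL1S : L1 ≤ S1) (hL2 : 0 < L2) (hS2 : S2 = L2)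
    (hT4def : T4 = L2 - (S1 - L1) / S1 * S2) :
    (weakStrategy L1 L2 T4 S1 S2).map Prod.fst = unifWithAtom 0 L1 S1 := by
  simp only [weakStrategy, unifWithAtom, Measure.map_add _ _ measurable_fst,
    Measure.map_smul, map_fst_unifSeg, unifInterval_self]
  have hS1 : S1 ≠ 0 := (hL1.trans_le hL1S).ne'
  have hL2 : L2 ≠ 0 := hL2.ne'
  rw [hT4def, hS2]
  congr 3
  field_simp
  ring

lemma weakStrategy_map_snd (hL1 : 0 < L1) (hL1S : L1 ≤ S1) (hL2 : 0 < L2) (hS2 : S2 = L2)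
    (hT4def : T4 = L2 - (S1 - L1) / S1 * S2) :
    (weakStrategy L1 L2 T4 S1 S2).map Prod.snd = unifInterval 0 S2 := by
  obtain ⟨hT4, hT4L⟩ := weakStrategy_T4_mem hL1 hL1S hL2 hS2 hT4def
  have hS1 : S1 ≠ 0 := (hL1.trans_le hL1S).ne'
  simp only [weakStrategy, Measure.map_add _ _ measurable_snd, Measure.map_smul, map_snd_unifSeg]
  rw [hS2, add_comm, unifInterval_comm T4 0, ← unifInterval_split hT4.le hT4L hL2, sub_zero,
    sub_zero, weakStrategy_T4_eq hL1 hL1S hS2 hT4def]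
  congr 3
  field_simp

lemma weakStrategy_ae_mem {S : Set (ℝ × ℝ)} (hS : MeasurableSet S)
    (h1 : ∀ t ∈ Ioo (0 : ℝ) 1, (0, (1 - t) * T4 + t * L2) ∈ S)
    (h2 : ∀ t ∈ Ioo (0 : ℝ) 1, (t * L1, (1 - t) * T4) ∈ S) :
    ∀ᵐ p ∂weakStrategy L1 L2 T4 S1 S2, p ∈ S := by
  simp only [weakStrategy, ae_add_measure_iff]
  refine ⟨Measure.ae_smul_measure (ae_unifSeg_mem hS fun t ht => ?_) _,
    Measure.ae_smul_measure (ae_unifSeg_mem hS fun t ht => ?_) _⟩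
  · convert h1 t ht using 2; ring
  · convert h2 t ht using 2 <;> ring

lemma isProbabilityMeasure_weakStrategy (hL1 : 0 < L1) (hL1S : L1 ≤ S1) (hL2 : 0 < L2)
    (hS2 : S2 = L2) (hT4def : T4 = L2 - (S1 - L1) / S1 * S2) :
    IsProbabilityMeasure (weakStrategy L1 L2 T4 S1 S2) := by
  have : IsProbabilityMeasure ((weakStrategy L1 L2 T4 S1 S2).map Prod.fst) := by
    rw [weakStrategy_map_fst hL1 hL1S hL2 hS2 hT4def]
    exact isProbabilityMeasure_unifWithAtom hL1.le hL1S
  exact Measure.isProbabilityMeasure_of_map Prod.fst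

lemma isStrategy2_weakStrategy {b : ℝ} (hL1 : 0 < L1) (hL1S : L1 ≤ S1) (hL2 : 0 < L2)
    (hS2 : S2 = L2) (hT4def : T4 = L2 - (S1 - L1) / S1 * S2) (hL1b : L1 ≤ b) (hL2b : L2 ≤ b) :
    IsStrategy2 b (weakStrategy L1 L2 T4 S1 S2) := by
  obtain ⟨hT4, hT4L⟩ := weakStrategy_T4_mem hL1 hL1S hL2 hS2 hT4def
  have := isProbabilityMeasure_weakStrategy hL1 hL1S hL2 hS2 hT4def
  refine isStrategy2_iff.mpr (weakStrategy_ae_mem (measurableSet_feas b) ?_ ?_)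
  · intro t ht
    refine ⟨le_rfl, by nlinarith [ht.1, ht.2], by nlinarith [ht.1, ht.2]⟩
  · intro t ht
    refine ⟨mul_nonneg ht.1.le hL1.le, mul_nonneg (by linarith [ht.2]) hT4.le, ?_⟩
    nlinarith [ht.1, ht.2]

lemma weakStrategy_ae_mem_Ico_prod_Ioc (hL1 : 0 < L1) (hL1S : L1 ≤ S1) (hL2 : 0 < L2)
    (hS2 : S2 = L2) (hT4def : T4 = L2 - (S1 - L1) / S1 * S2) :
    ∀ᵐ p ∂weakStrategy L1 L2 T4 S1 S2, p ∈ Ico 0 L1 ×ˢ Ioc 0 L2 := by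
  obtain ⟨hT4, hT4L⟩ := weakStrategy_T4_mem hL1 hL1S hL2 hS2 hT4def
  refine weakStrategy_ae_mem (measurableSet_Ico.prod measurableSet_Ioc) (fun t ht => ?_)
    (fun t ht => ?_)
  · exact ⟨⟨le_rfl, hL1⟩, by nlinarith [ht.1, ht.2], by nlinarith [ht.1, ht.2]⟩
  · refine ⟨⟨mul_nonneg ht.1.le hL1.le, by nlinarith [ht.2]⟩, ?_, by nlinarith [ht.1, ht.2]⟩
    exact mul_pos (by linarith [ht.2]) hT4

end WeakStrategy

lemma isBestResponse2_strongStrategy {i : Fin 2} {L1 L2 T2 T4 W1 W2 : ℝ} (hW1 : 0 < W1)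
    (hW2 : 0 < W2) (hL1 : 0 < L1) (hL1v : L1 ≤ v i 0) (hL2W : L2 ≤ W2) (hv2 : v i 1 = L2)
    (hT2 : 0 ≤ T2) (hT2def : T2 = L2 - L1 / W1 * W2)
    (hT4def : T4 = L2 - (v i 0 - L1) / v i 0 * v i 1) :
    IsBestResponse2 B v i (strongStrategy L1 L2 T2 W1 W2)
      (weakStrategy L1 L2 T4 (v i 0) (v i 1)) := by
  have hL2 : 0 < L2 :=
    hT2.trans_lt (by rw [hT2def]; linarith [show 0 < L1 / W1 * W2 by positivity])
  have hv : 0 < v i 1 := hv2 ▸ hL2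
  have := isProbabilityMeasure_strongStrategy hW1 hW2 hL1 hL2W hT2 hT2def
  have := isProbabilityMeasure_weakStrategy hL1 hL1v hL2 hv2 hT4def
  refine isBestResponse2_of_payoff (c := v i 0 - L1) (fun p hp => ?_) ?_
  · rw [integral_payoff2, weakStrategy_map_fst hL1 hL1v hL2 hv2 hT4def,
      weakStrategy_map_snd hL1 hL1v hL2 hv2 hT4def]
    linarith [itemPayoff_unifWithAtom_zero_le (B := B) hL1 hL1v hp.1,
      itemPayoff_unifInterval_le_zero (B := B) hv hp.2.1]
  · filter_upwards [strongStrategy_ae_mem_Ioc_prod_Icc hW1 hW2 hL1 hT2 hT2def] with p hp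
    rw [integral_payoff2, weakStrategy_map_fst hL1 hL1v hL2 hv2 hT4def,
      weakStrategy_map_snd hL1 hL1v hL2 hv2 hT4def,
      itemPayoff_unifWithAtom_zero_of_mem hL1 hL1v hp.1.1 hp.1.2,
      itemPayoff_unifInterval_of_mem hv (hv2 ▸ hp.2), add_zero]

lemma isBestResponse2_weakStrategy {i : Fin 2} {L1 L2 T2 T4 S1 S2 : ℝ} (hL1 : 0 < L1)
    (hL1min : L1 = min (B i) (v i 0)) (hL1S : L1 ≤ S1) (hL2 : 0 < L2) (hL2v : L2 ≤ v i 1)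
    (hS2 : S2 = L2) (hT2 : 0 ≤ T2) (hT2def : T2 = L2 - L1 / v i 0 * v i 1)
    (hT4def : T4 = L2 - (S1 - L1) / S1 * S2) (htie : winProb2 B v i 0 L1 L1 = 0) :
    IsBestResponse2 B v i (weakStrategy L1 L2 T4 S1 S2)
      (strongStrategy L1 L2 T2 (v i 0) (v i 1)) := by
  have hL1v : L1 ≤ v i 0 := hL1min ▸ min_le_right _ _
  have hv0 : 0 < v i 0 := hL1.trans_le hL1v
  have hv1 : 0 < v i 1 := hL2.trans_le hL2v
  have := isProbabilityMeasure_strongStrategy hv0 hv1 hL1 hL2v hT2 hT2def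
  have := isProbabilityMeasure_weakStrategy hL1 hL1S hL2 hS2 hT4def
  refine isBestResponse2_of_payoff (c := v i 1 - L2) (fun p hp => ?_) ?_
  · obtain ⟨hp1, hp2, hpB⟩ := hp
    have hvp : L1 < p.1 → v i 0 ≤ p.1 := fun h => by
      rcases min_lt_iff.mp (hL1min ▸ h) with h' | h'
      · linarith
      · exact h'.le
    rw [integral_payoff2, strongStrategy_map_fst hv1 hL2v hT2 hT2def,
      strongStrategy_map_snd hv0 hv1 hL1 hT2 hT2def]
    linarith [itemPayoff_unifWithAtom_top_le_zero hL1 hL1v htie hp1 hvp,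
      itemPayoff_unifWithAtom_zero_le (B := B) hL2 hL2v hp2]
  · filter_upwards [weakStrategy_ae_mem_Ico_prod_Ioc hL1 hL1S hL2 hS2 hT4def] with p hp
    rw [integral_payoff2, strongStrategy_map_fst hv1 hL2v hT2 hT2def,
      strongStrategy_map_snd hv0 hv1 hL1 hT2 hT2def,
      itemPayoff_unifWithAtom_top_of_lt hL1 hL1v hp.1.1 hp.1.2,
      itemPayoff_unifWithAtom_zero_of_mem hL2 hL2v hp.2.1 hp.2.2, zero_add]

end AllPay

open AllPay

theorem nash_two_items_case3 (B : Fin 2 → ℝ) (v : Fin 2 → Fin 2 → ℝ)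
    (hv : ∀ i j, 0 < v i j)
    (s : Fin 2) (hs : B (1 - s) < B s)
    (L1 L2 : ℝ) (hL1 : L1 = Lval2 B v 0) (hL2 : L2 = Lval2 B v 1)
    (hvs1 : L1 < v s 0) (hvs2 : v s 1 = L2)
    (T2 T4 : ℝ)
    (hT2 : T2 = L2 - L1 / v (1 - s) 0 * v (1 - s) 1)
    (hT4 : T4 = L2 - (v s 0 - L1) / v s 0 * v s 1)
    (hT2pos : 0 ≤ T2) (hbud : L1 + T2 ≤ B s) :
    IsNash2 B v (fun k =>
      if k = s then
        ENNReal.ofReal (1 - L2 / v (1 - s) 1) • Measure.dirac ((L1, 0) : ℝ × ℝ) +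
          ENNReal.ofReal (T2 / v (1 - s) 1) • unifSeg (L1, 0) (L1, T2) +
          ENNReal.ofReal (L1 / v (1 - s) 0) • unifSeg (0, L2) (L1, T2)
      else
        ENNReal.ofReal ((L2 - T4) / v s 1) • unifSeg (0, T4) (0, L2) +
          ENNReal.ofReal (L1 / v s 0) • unifSeg (0, T4) (L1, 0)) := by
  have hL2pos : 0 < L2 := hvs2 ▸ hv s 1
  have hL2w : L2 ≤ B (1 - s) := hL2 ▸ Lval2_le_budget _ _
  have hL2vw : L2 ≤ v (1 - s) 1 := hL2 ▸ Lval2_le_value _ _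
  have hL1s : L1 < min (B s) (v s 0) :=
    lt_min ((hL1 ▸ Lval2_le_budget (1 - s) 0 : L1 ≤ _).trans_lt hs) hvs1
  have hL1w : L1 = min (B (1 - s)) (v (1 - s) 0) := hL1 ▸ Lval2_eq_min_of_lt (hL1 ▸ hL1s)
  have hL1pos : 0 < L1 := hL1w ▸ lt_min (hL2pos.trans_le hL2w) (hv _ _)
  have htie : winProb2 B v (1 - s) 0 L1 L1 = 0 :=
    hL1 ▸ winProb2_Lval2_self (by rw [sub_sub_cancel, ← hL1w]; exact hL1s)
  change IsNash2 B v fun k => if k = s then strongStrategy L1 L2 T2 (v (1 - s) 0) (v (1 - s) 1)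
    else weakStrategy L1 L2 T4 (v s 0) (v s 1)
  refine isNash2_ite (isStrategy2_strongStrategy (hv _ _) (hv _ _) hL1pos hL2vw hT2pos hT2 hbud
    (hL2w.trans hs.le)) (isStrategy2_weakStrategy hL1pos hvs1.le hL2pos hvs2 hT4
    (hL1w ▸ min_le_left _ _) hL2w) ?_ ?_
  · exact isBestResponse2_strongStrategy (hv _ _) (hv _ _) hL1pos hvs1.le hL2vw hvs2 hT2pos hT2 hT4
  · exact isBestResponse2_weakStrategy hL1pos hL1w hvs1.le hL2pos hL2vw hvs2 hT2pos hT2 hT4 htie
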